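/- Dyadic localization lemma: let a > 0, 0 ≤ α < d, f ∈ L¹_loc(γ') nonnegative. If for some cube Q ∈ 𝒬_a and some t > 0 one has ℓ(Q)^{α−d} ∫_Q f dγ' > t, then there exists a dyadic cube P (side length a power of 2, vertices on the corresponding lattice) with P ∈ 𝒬_{2a+3√d·a²}, Q ⊆ 3P, and ℓ(P)^{α−d} ∫_P f dγ' > 2^{α−2d} t. -/

import Mathlib

open MeasureTheory ENNReal Set

noncomputable section

abbrev E (d : ℕ) := EuclideanSpace ℝ (Fin d)

def gammaRad (d : ℕ) (α : ℝ) : Measure (E d) :=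
  volume.withDensity fun x => ENNReal.ofReal (Real.exp (-(α/d) * ‖x‖^2))

def cube (d : ℕ) (c : E d) (l : ℝ) : Set (E d) := {x | ∀ i, |x i - c i| ≤ l / 2}

def mfun {d : ℕ} (x : E d) : ℝ := if ‖x‖ ≤ 1 then 1 else 1 / ‖x‖

def adm (d : ℕ) (a : ℝ) (c : E d) (l : ℝ) : Prop := 0 < l ∧ l ≤ a * mfun c

/-- The cube with center `c` and side `l` is a dyadic cube: `l = 2^k` and the
vertices of the cube lie on the lattice `2^k ℤ^d`. -/
def IsDyadic (d : ℕ) (c : E d) (l : ℝ) : Prop :=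
  ∃ (k : ℤ) (m : Fin d → ℤ), l = 2 ^ k ∧ ∀ i, c i = ((m i : ℝ) + 1/2) * 2 ^ k

/-! Choose `k` with `ℓ(Q) ≤ 2 ^ k ≤ 2 ℓ(Q)`. The cube `Q` is covered by `2 ^ d` dyadic cubes of
side `2 ^ k`, so one of them, `P`, meets `Q` and carries at least a `2 ^ (-d)` fraction of
`∫_Q f dγ'`; as `α - d ≤ 0` and `ℓ(P) ≤ 2 ℓ(Q)`, this costs the factor `2 ^ (α - 2d)`. Since `P`
meets `Q`, their centers differ by at most `(3/2) ℓ(Q)` in each coordinate, which gives `Q ⊆ 3P`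
and, through `|c_P| ≤ |c_Q| + (3√d/2) ℓ(Q)`, the admissibility of `P` for `2a + 3√d a²`. -/

theorem EuclideanSpace.norm_le_sqrt_card_mul {ι : Type*} [Fintype ι] {v : EuclideanSpace ℝ ι}
    {r : ℝ} (hr : 0 ≤ r) (hv : ∀ i, |v i| ≤ r) : ‖v‖ ≤ Real.sqrt (Fintype.card ι) * r := by
  have hsum : ∑ i, ‖v i‖ ^ 2 ≤ Fintype.card ι * r ^ 2 := by
    calc ∑ i, ‖v i‖ ^ 2 ≤ ∑ _i : ι, r ^ 2 :=
          Finset.sum_le_sum fun i _ => pow_le_pow_left₀ (norm_nonneg _) (hv i) 2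
      _ = Fintype.card ι * r ^ 2 := by simp
  calc ‖v‖ = Real.sqrt (∑ i, ‖v i‖ ^ 2) := EuclideanSpace.norm_eq v
    _ ≤ Real.sqrt (Fintype.card ι * r ^ 2) := Real.sqrt_le_sqrt hsum
    _ = Real.sqrt (Fintype.card ι) * r := by
        rw [Real.sqrt_mul (Nat.cast_nonneg _), Real.sqrt_sq hr]

theorem le_mul_mfun_iff {d : ℕ} {a l : ℝ} {c : E d} (hl : 0 ≤ l) :
    l ≤ a * mfun c ↔ l ≤ a ∧ l * ‖c‖ ≤ a := by
  unfold mfun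
  split_ifs with hc
  · rw [mul_one]
    exact ⟨fun hla => ⟨hla, by nlinarith [norm_nonneg c]⟩, And.left⟩
  · have hc1 : 1 < ‖c‖ := not_le.mp hc
    rw [mul_one_div, le_div_iff₀ (by linarith)]
    exact ⟨fun h => ⟨by nlinarith, h⟩, And.right⟩

theorem adm_of_norm_sub_le {d : ℕ} {a l L r : ℝ} {c c' : E d} (hQ : adm d a c l) (hL : 0 < L)
    (hLl : L ≤ 2 * l) (hr : 0 ≤ r) (hc' : ‖c' - c‖ ≤ r * l / 2) :
    adm d (2 * a + r * a ^ 2) c' L := by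
  obtain ⟨hl, hla⟩ := hQ
  obtain ⟨hla, hlc⟩ := (le_mul_mfun_iff hl.le).mp hla
  have hnorm : ‖c'‖ ≤ ‖c‖ + r * l / 2 := by
    simpa using norm_le_norm_add_norm_sub' c' c |>.trans (by linarith)
  refine ⟨hL, (le_mul_mfun_iff hL.le).mpr ⟨by nlinarith, ?_⟩⟩
  calc L * ‖c'‖ ≤ 2 * l * (‖c‖ + r * l / 2) := by gcongr
    _ = 2 * (l * ‖c‖) + r * l ^ 2 := by ring
    _ ≤ 2 * a + r * a ^ 2 := by gcongr

theorem abs_sub_le_of_cube_inter_nonempty {d : ℕ} {c c' : E d} {l L : ℝ}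
    (h : (cube d c' L ∩ cube d c l).Nonempty) (i : Fin d) : |c' i - c i| ≤ (l + L) / 2 := by
  obtain ⟨y, hy', hy⟩ := h
  have h1 := hy' i
  have h2 := hy i
  rw [abs_le] at h1 h2 ⊢
  constructor <;> linarith

theorem cube_subset_cube_three_mul {d : ℕ} {c c' : E d} {l L : ℝ}
    (h : (cube d c' L ∩ cube d c l).Nonempty) (hlL : l ≤ L) : cube d c l ⊆ cube d c' (3 * L) := by
  intro x hx i
  have h1 := abs_sub_le_of_cube_inter_nonempty h i
  have h2 := hx i
  rw [abs_le] at h1 h2 ⊢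
  constructor <;> linarith

def dyadicCenter (d : ℕ) (L : ℝ) (m : Fin d → ℤ) : E d :=
  WithLp.toLp 2 fun i => ((m i : ℝ) + 1 / 2) * L

theorem isDyadic_dyadicCenter {d : ℕ} (k : ℤ) (m : Fin d → ℤ) :
    IsDyadic d (dyadicCenter d (2 ^ k) m) (2 ^ k) :=
  ⟨k, m, rfl, fun _ => rfl⟩

theorem exists_zpow_two_mem_Icc {l : ℝ} (hl : 0 < l) :
    ∃ k : ℤ, l ≤ 2 ^ k ∧ (2 : ℝ) ^ k ≤ 2 * l := by
  obtain ⟨n, hn, hn1⟩ := exists_mem_Ioc_zpow hl one_lt_two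
  refine ⟨n + 1, hn1, ?_⟩
  rw [zpow_add_one₀ two_ne_zero]
  linarith

theorem mem_cube_dyadicCenter_floor {d : ℕ} {L : ℝ} (hL : 0 < L) (x : E d) :
    x ∈ cube d (dyadicCenter d L fun i => ⌊x i / L⌋) L := by
  intro i
  have h1 : (⌊x i / L⌋ : ℝ) * L ≤ x i := (le_div_iff₀ hL).mp (Int.floor_le _)
  have h2 : x i < (⌊x i / L⌋ + 1) * L := (div_lt_iff₀ hL).mp (Int.lt_floor_add_one _)
  change |x i - ((⌊x i / L⌋ : ℝ) + 1 / 2) * L| ≤ L / 2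
  rw [abs_le]
  constructor <;> linarith

def dyadicCoverIndices (d : ℕ) (c : E d) (l L : ℝ) : Finset (Fin d → ℤ) :=
  Finset.Icc (fun i => ⌊(c i - l / 2) / L⌋) (fun i => ⌊(c i - l / 2) / L⌋ + 1)

theorem card_dyadicCoverIndices (d : ℕ) (c : E d) (l L : ℝ) :
    (dyadicCoverIndices d c l L).card = 2 ^ d := by
  have htwo : ∀ z : ℤ, (z + 1 + 1 - z).toNat = 2 := by omega
  simp [dyadicCoverIndices, Pi.card_Icc, Int.card_Icc, htwo]

theorem cube_subset_biUnion_dyadicCoverIndices {d : ℕ} {c : E d} {l L : ℝ} (hL : 0 < L)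
    (hlL : l ≤ L) :
    cube d c l ⊆ ⋃ m ∈ dyadicCoverIndices d c l L, cube d (dyadicCenter d L m) L := by
  intro x hx
  refine mem_biUnion ?_ (mem_cube_dyadicCenter_floor hL x)
  rw [Finset.mem_coe, dyadicCoverIndices, Finset.mem_Icc]
  refine ⟨fun i => ?_, fun i => ?_⟩ <;> have hxi := abs_le.mp (hx i)
  · exact Int.floor_le_floor (by gcongr; linarith)
  · change ⌊x i / L⌋ ≤ ⌊(c i - l / 2) / L⌋ + 1
    rw [← Int.floor_add_one]
    refine Int.floor_le_floor ?_
    rw [div_add_one hL.ne']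
    gcongr
    linarith

theorem exists_inter_nonempty_lintegral_le_card_mul {ι α : Type*} [MeasurableSpace α]
    {μ : Measure α} {f : α → ℝ≥0∞} {S : Set α} {s : Finset ι} {T : ι → Set α}
    (hS : S ⊆ ⋃ i ∈ s, T i) (hpos : ∫⁻ x in S, f x ∂μ ≠ 0) :
    ∃ i ∈ s, (T i ∩ S).Nonempty ∧ ∫⁻ x in S, f x ∂μ ≤ s.card * ∫⁻ x in T i, f x ∂μ := by
  set g : ι → ℝ≥0∞ := fun i => ∫⁻ x in T i ∩ S, f x ∂μ
  have hsum : ∫⁻ x in S, f x ∂μ ≤ ∑ i ∈ s, g i := by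
    calc ∫⁻ x in S, f x ∂μ ≤ ∫⁻ x in ⋃ i : s, T i ∩ S, f x ∂μ := by
          refine lintegral_mono_set fun x hx => ?_
          obtain ⟨i, hi, hxi⟩ := mem_iUnion₂.mp (hS hx)
          exact mem_iUnion.mpr ⟨⟨i, hi⟩, hxi, hx⟩
      _ ≤ ∑' i : s, g i := lintegral_iUnion_le _ _
      _ = ∑ i ∈ s, g i := by rw [tsum_fintype, Finset.sum_coe_sort s g]
  have hs : s.Nonempty := by
    by_contra hs
    simp_all [Finset.not_nonempty_iff_eq_empty]
  obtain ⟨i, hi, hmax⟩ := s.exists_max_image g hs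
  have hgi : ∫⁻ x in S, f x ∂μ ≤ s.card * g i := by
    simpa using hsum.trans (Finset.sum_le_card_nsmul s g (g i) hmax)
  refine ⟨i, hi, ?_, hgi.trans (by gcongr; exact lintegral_mono_set inter_subset_left)⟩
  by_contra hempty
  simp_all [g, not_nonempty_iff_eq_empty]

theorem ofReal_two_rpow_mul_lt {n : ℕ} {α l L : ℝ} {t I J : ℝ≥0∞} (hαn : α ≤ n) (hl : 0 < l)
    (hL : 0 < L) (hLl : L ≤ 2 * l) (ht : t < ENNReal.ofReal (l ^ (α - n)) * I)
    (hIJ : I ≤ 2 ^ n * J) :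
    ENNReal.ofReal ((2 : ℝ) ^ (α - 2 * n)) * t < ENNReal.ofReal (L ^ (α - n)) * J := by
  have hscale : (2 : ℝ) ^ (α - 2 * n) * l ^ (α - n) * 2 ^ n = (2 * l) ^ (α - n) := by
    rw [Real.mul_rpow zero_le_two hl.le, mul_right_comm, ← Real.rpow_natCast,
      ← Real.rpow_add two_pos]
    ring_nf
  have hc0 : ENNReal.ofReal ((2 : ℝ) ^ (α - 2 * n)) ≠ 0 := by
    rw [ne_eq, ENNReal.ofReal_eq_zero, not_le]
    positivity
  calc ENNReal.ofReal ((2 : ℝ) ^ (α - 2 * n)) * t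
      < ENNReal.ofReal ((2 : ℝ) ^ (α - 2 * n)) * (ENNReal.ofReal (l ^ (α - n)) * I) :=
        (ENNReal.mul_lt_mul_iff_right hc0 ENNReal.ofReal_ne_top).mpr ht
    _ ≤ ENNReal.ofReal ((2 : ℝ) ^ (α - 2 * n)) * (ENNReal.ofReal (l ^ (α - n)) * (2 ^ n * J)) := by
        gcongr
    _ = ENNReal.ofReal ((2 * l) ^ (α - n)) * J := by
        rw [← hscale, ENNReal.ofReal_mul (by positivity), ENNReal.ofReal_mul (by positivity),
          ENNReal.ofReal_pow zero_le_two, ENNReal.ofReal_ofNat]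
        ring
    _ ≤ ENNReal.ofReal (L ^ (α - n)) * J := by
        gcongr ?_ * _
        exact ENNReal.ofReal_le_ofReal (Real.rpow_le_rpow_of_nonpos hL hLl (by linarith))

theorem dyadic_localization_general (d : ℕ) (a α : ℝ) (hαd : α < d)
    (f : E d → ℝ≥0∞) (c : E d) (l : ℝ) (hQ : adm d a c l)
    (t : ℝ≥0∞)
    (h : t < ENNReal.ofReal (l ^ (α - d)) * ∫⁻ x in cube d c l, f x ∂(gammaRad d α)) :
    ∃ (cP : E d) (lP : ℝ), IsDyadic d cP lP ∧
      adm d (2*a + 3*Real.sqrt d*a^2) cP lP ∧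
      cube d c l ⊆ cube d cP (3*lP) ∧
      ENNReal.ofReal ((2:ℝ) ^ (α - 2*d)) * t <
        ENNReal.ofReal (lP ^ (α - d)) * ∫⁻ x in cube d cP lP, f x ∂(gammaRad d α) := by
  have hl : 0 < l := hQ.1
  obtain ⟨k, hlk, hkl⟩ := exists_zpow_two_mem_Icc hl
  have hk : (0 : ℝ) < 2 ^ k := zpow_pos two_pos k
  have hpos : ∫⁻ x in cube d c l, f x ∂(gammaRad d α) ≠ 0 := by
    rintro h0
    simp [h0] at h
  obtain ⟨m, -, hmeet, hle⟩ := exists_inter_nonempty_lintegral_le_card_mul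
    (cube_subset_biUnion_dyadicCoverIndices hk hlk) hpos
  rw [card_dyadicCoverIndices] at hle
  have hcenter : ‖dyadicCenter d (2 ^ k) m - c‖ ≤ 3 * Real.sqrt d * l / 2 := by
    have hcoord : ∀ i, |(dyadicCenter d (2 ^ k) m - c) i| ≤ 3 * l / 2 := fun i =>
      (abs_sub_le_of_cube_inter_nonempty hmeet i).trans (by linarith)
    calc _ ≤ Real.sqrt (Fintype.card (Fin d)) * (3 * l / 2) :=
          EuclideanSpace.norm_le_sqrt_card_mul (by positivity) hcoord
      _ = _ := by rw [Fintype.card_fin]; ring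
  refine ⟨dyadicCenter d (2 ^ k) m, 2 ^ k, isDyadic_dyadicCenter k m,
    adm_of_norm_sub_le hQ hk hkl (by positivity) hcenter, cube_subset_cube_three_mul hmeet hlk,
    ofReal_two_rpow_mul_lt hαd.le hl hk hkl h (by exact_mod_cast hle)⟩

/-- Dyadic localization lemma: if `ℓ(Q)^{α-d} ∫_Q f dγ' > t` for some `Q ∈ 𝒬_a`, then there
is a dyadic cube `P ∈ 𝒬_{2a+3√d·a²}` with `Q ⊆ 3P` and `ℓ(P)^{α-d} ∫_P f dγ' > 2^{α-2d} t`. -/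
theorem dyadic_localization (d : ℕ) (a α : ℝ) (ha : 0 < a) (hα : 0 ≤ α) (hαd : α < d)
    (f : E d → ℝ≥0∞) (hf : Measurable f) (c : E d) (l : ℝ) (hQ : adm d a c l)
    (t : ℝ≥0∞) (ht : 0 < t)
    (h : t < ENNReal.ofReal (l ^ (α - d)) * ∫⁻ x in cube d c l, f x ∂(gammaRad d α)) :
    ∃ (cP : E d) (lP : ℝ), IsDyadic d cP lP ∧
      adm d (2*a + 3*Real.sqrt d*a^2) cP lP ∧
      cube d c l ⊆ cube d cP (3*lP) ∧
      ENNReal.ofReal ((2:ℝ) ^ (α - 2*d)) * t <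
        ENNReal.ofReal (lP ^ (α - d)) * ∫⁻ x in cube d cP lP, f x ∂(gammaRad d α) :=
  dyadic_localization_general d a α hαd f c l hQ t h

end
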